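/- arXiv:1806.04817 — 3 statements merged into one kernel-verified Lean document; each statement's English description precedes it below -/
import Mathlib

section
/- For m ≥ 1 and b ∈ ℂ with positive real part condition as needed, the iterated integral operator (∫₀^t · t dt)^{m−1} applied to sin(bt) satisfies ℒ[(∫₀^t · t dt)^{m−1} sin(bt)](s) = 2^{m−1}(m−1)!·b/(s² + b²)^m for Re(s) > |Im b|. -/
/-!
Write `Gₙ = (∫₀^t · t dt)ⁿ sin(b·)`. All `Gₙ` are continuous and of exponential order `a` for
every `a > |Im b|`, so their Laplace transforms are holomorphic on `Re s > |Im b|`. Since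
`Gₙ₊₁' = t Gₙ` and `Gₙ₊₁(0) = 0`, integration by parts followed by differentiation under the
integral sign gives `ℒGₙ₊₁(s) = ℒ[t Gₙ](s) / s = -(ℒGₙ)'(s) / s`. Starting from
`ℒ[sin(b·)](s) = b / (s² + b²)`, each step multiplies the transform by `2(n + 1) / (s² + b²)`.
-/

open MeasureTheory

/-- The iterated weighted integral operator `g ↦ (∫₀^t g(τ) τ dτ)`, iterated `n` times. -/
noncomputable def iterWeightedInt : ℕ → (ℝ → ℂ) → (ℝ → ℂ)
  | 0, g => g
  | n + 1, g => fun t => ∫ τ in (0 : ℝ)..t, iterWeightedInt n g τ * τ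

open Set Filter Topology Complex Real

/-- The Laplace transform; the Bochner integral gives the junk value `0` where the integrand is
not integrable on `(0, ∞)`. -/
noncomputable def laplace (f : ℝ → ℂ) (s : ℂ) : ℂ :=
  ∫ t in Ioi (0 : ℝ), cexp (-s * t) * f t

def HasExpOrder (f : ℝ → ℂ) (a : ℝ) : Prop :=
  ∃ C, ∀ t, 0 ≤ t → ‖f t‖ ≤ C * rexp (a * t)

lemma norm_sin_le_exp_abs_im (z : ℂ) : ‖Complex.sin z‖ ≤ rexp |z.im| := by
  have hexp : ∀ x, x ≤ |z.im| → rexp x ≤ rexp |z.im| := fun x hx => exp_le_exp.2 hx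
  calc ‖Complex.sin z‖ = ‖cexp (-z * I) - cexp (z * I)‖ / 2 := by simp [Complex.sin]
    _ ≤ (rexp z.im + rexp (-z.im)) / 2 := by
        gcongr
        refine (norm_sub_le _ _).trans_eq ?_
        simp [Complex.norm_exp]
    _ ≤ rexp |z.im| := by linarith [hexp _ (le_abs_self z.im), hexp _ (neg_le_abs z.im)]

lemma le_exp_mul_div {δ : ℝ} (hδ : 0 < δ) (t : ℝ) : t ≤ rexp (δ * t) / δ := by
  rw [le_div_iff₀ hδ, mul_comm]
  linarith [add_one_le_exp (δ * t)]

lemma mul_exp_mul_le {a a' C : ℝ} (hC : 0 ≤ C) (h : a < a') (t : ℝ) :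
    C * rexp (a * t) * t ≤ C / (a' - a) * rexp (a' * t) :=
  calc C * rexp (a * t) * t ≤ C * rexp (a * t) * (rexp ((a' - a) * t) / (a' - a)) := by
        gcongr; exact le_exp_mul_div (sub_pos.2 h) t
    _ = C / (a' - a) * rexp (a' * t) := by
      rw [mul_div_assoc', mul_assoc, ← Real.exp_add]; ring_nf

lemma norm_cexp_neg_mul_mul_le {f : ℝ → ℂ} {C a t : ℝ} (hf : ‖f t‖ ≤ C * rexp (a * t)) (z : ℂ) :
    ‖cexp (-z * t) * f t‖ ≤ C * rexp ((a - z.re) * t) := by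
  rw [norm_mul, Complex.norm_exp]
  calc rexp (-z * t).re * ‖f t‖ ≤ rexp (-z.re * t) * (C * rexp (a * t)) := by
        simp only [neg_mul, neg_re, mul_re, ofReal_re, ofReal_im, mul_zero, sub_zero]; gcongr
    _ = C * rexp ((a - z.re) * t) := by rw [mul_left_comm, ← Real.exp_add]; ring_nf

lemma nonneg_of_norm_le_mul_exp {f : ℝ → ℂ} {a C : ℝ}
    (hC : ∀ t, 0 ≤ t → ‖f t‖ ≤ C * rexp (a * t)) : 0 ≤ C :=
  nonneg_of_mul_nonneg_left ((norm_nonneg _).trans (hC 0 le_rfl)) (exp_pos _)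

section ExpOrder

variable {f : ℝ → ℂ} {a a' : ℝ}

lemma hasExpOrder_sin_mul (b : ℂ) : HasExpOrder (fun t => Complex.sin (b * t)) |b.im| :=
  ⟨1, fun t ht => by
    simpa [abs_mul, abs_of_nonneg ht] using norm_sin_le_exp_abs_im (b * t)⟩

lemma HasExpOrder.mono (hf : HasExpOrder f a) (h : a ≤ a') :
    HasExpOrder f a' := by
  obtain ⟨C, hC⟩ := hf
  exact ⟨C, fun t ht => (hC t ht).trans
    (mul_le_mul_of_nonneg_left (by gcongr) (nonneg_of_norm_le_mul_exp hC))⟩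

lemma HasExpOrder.mul_ofReal (hf : HasExpOrder f a) (h : a < a') :
    HasExpOrder (fun t => f t * t) a' := by
  obtain ⟨C, hC⟩ := hf
  refine ⟨C / (a' - a), fun t ht => ?_⟩
  rw [norm_mul, norm_real, Real.norm_of_nonneg ht]
  exact (mul_le_mul_of_nonneg_right (hC t ht) ht).trans
    (mul_exp_mul_le (nonneg_of_norm_le_mul_exp hC) h t)

lemma HasExpOrder.primitive (hf : HasExpOrder f a) (ha : 0 ≤ a) (h : a < a') :
    HasExpOrder (fun t => ∫ τ in (0 : ℝ)..t, f τ) a' := by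
  obtain ⟨C, hC⟩ := hf
  have hC0 := nonneg_of_norm_le_mul_exp hC
  refine ⟨C / (a' - a), fun t ht => ?_⟩
  have hbound : ∀ τ ∈ uIoc 0 t, ‖f τ‖ ≤ C * rexp (a * t) := by
    rw [uIoc_of_le ht]
    exact fun τ hτ => (hC τ hτ.1.le).trans (by gcongr; exact hτ.2)
  calc ‖∫ τ in (0 : ℝ)..t, f τ‖ ≤ C * rexp (a * t) * t := by
        simpa [abs_of_nonneg ht] using intervalIntegral.norm_integral_le_of_norm_le_const hbound
    _ ≤ C / (a' - a) * rexp (a' * t) := mul_exp_mul_le hC0 h t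

end ExpOrder

section Laplace

variable {f : ℝ → ℂ} {a : ℝ} {s : ℂ}

lemma HasExpOrder.integrableOn_laplace (hf : HasExpOrder f a) (hc : Continuous f)
    (ha : a < s.re) : IntegrableOn (fun t : ℝ => cexp (-s * t) * f t) (Ioi 0) := by
  obtain ⟨C, hC⟩ := hf
  have hmeas : Continuous fun t : ℝ => cexp (-s * t) * f t := by fun_prop
  exact ((integrableOn_exp_mul_Ioi (sub_neg.2 ha) 0).const_mul C).mono' hmeas.aestronglyMeasurable
    (ae_restrict_of_forall_mem measurableSet_Ioi fun t ht =>
      norm_cexp_neg_mul_mul_le (hC t (le_of_lt ht)) s)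

lemma HasExpOrder.tendsto_laplace_integrand (hf : HasExpOrder f a) (ha : a < s.re) :
    Tendsto (fun t : ℝ => cexp (-s * t) * f t) atTop (𝓝 0) := by
  obtain ⟨C, hC⟩ := hf
  have hlim : Tendsto (fun t : ℝ => C * rexp ((a - s.re) * t)) atTop (𝓝 0) := by
    simpa using (tendsto_exp_atBot.comp
      (tendsto_id.const_mul_atTop_of_neg (sub_neg.2 ha))).const_mul C
  exact squeeze_zero_norm'
    ((eventually_ge_atTop 0).mono fun t ht => norm_cexp_neg_mul_mul_le (hC t ht) s) hlim

lemma HasExpOrder.hasDerivAt_laplace (hf : HasExpOrder f a) (hc : Continuous f)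
    (ha : a < s.re) : HasDerivAt (laplace f) (-laplace (fun t => f t * t) s) s := by
  set a' := (a + s.re) / 2
  set ε := (s.re - a') / 2
  have hε : 0 < ε := by simp only [ε, a']; linarith
  obtain ⟨C, hC⟩ := hf.mul_ofReal (left_lt_add_div_two.2 ha : a < a')
  have hbound : ∀ t ∈ Ioi (0 : ℝ), ∀ z ∈ Metric.ball s ε,
      ‖-(cexp (-z * t) * (f t * t))‖ ≤ C * rexp (-ε * t) := by
    intro t ht z hz
    have hre : |(z - s).re| < ε := (abs_re_le_norm _).trans_lt (mem_ball_iff_norm.1 hz)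
    rw [norm_neg]
    refine (norm_cexp_neg_mul_mul_le (f := fun t => f t * t) (hC t (le_of_lt ht)) z).trans ?_
    have hC0 : 0 ≤ C := nonneg_of_norm_le_mul_exp hC
    gcongr
    · exact le_of_lt ht
    · rw [sub_re] at hre
      simp only [ε, a'] at hre ⊢
      linarith [(abs_lt.1 hre).1]
  have hderiv : ∀ t : ℝ, ∀ z : ℂ,
      HasDerivAt (fun z => cexp (-z * t) * f t) (-(cexp (-z * t) * (f t * t))) z := by
    intro t z
    refine (((hasDerivAt_neg z).mul_const (t : ℂ)).cexp.mul_const (f t)).congr_deriv ?_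
    ring
  have key := hasDerivAt_integral_of_dominated_loc_of_deriv_le (μ := volume.restrict (Ioi 0))
    (F := fun z (t : ℝ) => cexp (-z * t) * f t) (F' := fun z t => -(cexp (-z * t) * (f t * t)))
    (bound := fun t => C * rexp (-ε * t)) (Metric.ball_mem_nhds s hε)
    (Eventually.of_forall fun z => (by fun_prop : Continuous _).aestronglyMeasurable)
    (hf.integrableOn_laplace hc ha) (by fun_prop : Continuous _).aestronglyMeasurable
    (ae_restrict_of_forall_mem measurableSet_Ioi hbound)
    ((integrableOn_exp_mul_Ioi (neg_lt_zero.2 hε) 0).const_mul C)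
    (Eventually.of_forall fun t z _ => hderiv t z)
  rw [laplace, ← integral_neg]
  exact key.2

lemma HasExpOrder.laplace_primitive (hf : HasExpOrder f a) (hc : Continuous f) (ha0 : 0 ≤ a)
    (ha : a < s.re) :
    laplace (fun t => ∫ τ in (0 : ℝ)..t, f τ) s = laplace f s / s := by
  set F := fun t => ∫ τ in (0 : ℝ)..t, f τ
  set u := fun t : ℝ => -cexp (-s * t) / s
  have hs : s ≠ 0 := fun h => by simp [h] at ha; linarith
  have ha' : (a + s.re) / 2 < s.re := add_div_two_lt_right.2 ha
  have hFc : Continuous F :=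
    intervalIntegral.continuous_primitive (fun _ _ => hc.intervalIntegrable _ _) 0
  have hF : HasExpOrder F ((a + s.re) / 2) := hf.primitive ha0 (left_lt_add_div_two.2 ha)
  have hF' : ∀ t, HasDerivAt F (f t) t := fun t => (hc.integral_hasStrictDerivAt 0 t).hasDerivAt
  have hu : ∀ t : ℝ, HasDerivAt u (cexp (-s * t)) t := by
    intro t
    have hexp := ((hasDerivAt_id (t : ℂ)).const_mul (-s)).cexp.comp_ofReal
    refine (hexp.neg.div_const s).congr_deriv ?_
    simp only [id]
    field_simp
  have huf : IntegrableOn (fun t => u t * f t) (Ioi 0) :=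
    ((hf.integrableOn_laplace hc ha).div_const s).neg.congr
      (Eventually.of_forall fun t => by simp only [u, Pi.neg_apply]; ring)
  have hzero : Tendsto (fun t => u t * F t) (𝓝[>] 0) (𝓝 0) := by
    have hF0 : F 0 = 0 := intervalIntegral.integral_same
    have := (by fun_prop : Continuous fun t => u t * F t).tendsto 0
    simpa [hF0] using this.mono_left (nhdsWithin_le_nhds (s := Ioi 0))
  have hinfty : Tendsto (fun t => u t * F t) atTop (𝓝 0) := by
    have := ((hF.tendsto_laplace_integrand ha').div_const s).neg
    rw [zero_div, neg_zero] at this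
    exact this.congr fun t => by simp only [u]; ring
  have hibp := integral_Ioi_mul_deriv_eq_deriv_mul (fun t _ => hu t) (fun t _ => hF' t) huf
    (hF.integrableOn_laplace hFc ha') hzero hinfty
  have hlhs : ∫ t in Ioi (0 : ℝ), u t * f t = -(laplace f s / s) := by
    rw [laplace, ← integral_div, ← integral_neg]
    exact integral_congr_ae (Eventually.of_forall fun t => by simp only [u]; ring)
  rw [hlhs, sub_zero, zero_sub] at hibp
  exact (neg_inj.1 hibp).symm

end Laplace

lemma sq_add_sq_ne_zero_of_abs_im_lt {b s : ℂ} (hs : |b.im| < s.re) : s ^ 2 + b ^ 2 ≠ 0 := by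
  have h₁ : s + b * I ≠ 0 := fun h => by
    have := congrArg re h; simp at this; linarith [le_abs_self b.im]
  have h₂ : s - b * I ≠ 0 := fun h => by
    have := congrArg re h; simp at this; linarith [neg_abs_le b.im]
  have hfac : s ^ 2 + b ^ 2 = (s + b * I) * (s - b * I) := by linear_combination b ^ 2 * I_sq
  rw [hfac]
  exact mul_ne_zero h₁ h₂

lemma laplace_sin_mul (b : ℂ) {s : ℂ} (hs : |b.im| < s.re) :
    laplace (fun t => Complex.sin (b * t)) s = b / (s ^ 2 + b ^ 2) := by
  have h₁ : (-s - I * b).re < 0 := by simp; linarith [le_abs_self b.im]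
  have h₂ : (-s + I * b).re < 0 := by simp; linarith [neg_abs_le b.im]
  have h₁' : -s - I * b ≠ 0 := fun h => by simp [h] at h₁
  have h₂' : -s + I * b ≠ 0 := fun h => by simp [h] at h₂
  have hsplit : ∀ t : ℝ, cexp (-s * t) * Complex.sin (b * t) =
      I / 2 * (cexp ((-s - I * b) * t) - cexp ((-s + I * b) * t)) := by
    intro t
    rw [show (-s - I * b) * t = -s * t + -(b * t) * I by ring,
      show (-s + I * b) * t = -s * t + b * t * I by ring, Complex.exp_add, Complex.exp_add,
      Complex.sin]
    ring
  simp_rw [laplace, hsplit]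
  rw [integral_const_mul, integral_sub (integrableOn_exp_mul_complex_Ioi h₁ 0)
    (integrableOn_exp_mul_complex_Ioi h₂ 0), integral_exp_mul_complex_Ioi h₁,
    integral_exp_mul_complex_Ioi h₂]
  have hsb := sq_add_sq_ne_zero_of_abs_im_lt hs
  simp only [ofReal_zero, mul_zero, Complex.exp_zero]
  field_simp
  linear_combination (-2 * b * s ^ 2) * I_sq

section IterWeightedInt

variable {g : ℝ → ℂ} {a₀ : ℝ}

lemma continuous_iterWeightedInt (hg : Continuous g) (n : ℕ) :
    Continuous (iterWeightedInt n g) := by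
  induction n with
  | zero => exact hg
  | succ n ih =>
    exact intervalIntegral.continuous_primitive
      (fun _ _ => (ih.mul continuous_ofReal).intervalIntegrable _ _) 0

lemma hasExpOrder_iterWeightedInt (hg : ∀ a, a₀ < a → HasExpOrder g a) (ha₀ : 0 ≤ a₀)
    (n : ℕ) : ∀ a, a₀ < a → HasExpOrder (iterWeightedInt n g) a := by
  induction n with
  | zero => exact hg
  | succ n ih =>
    intro a ha
    have ha₁ : a₀ < (a₀ + a) / 2 := left_lt_add_div_two.2 ha
    exact ((ih _ (left_lt_add_div_two.2 ha₁)).mul_ofReal (add_div_two_lt_right.2 ha₁)).primitive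
      (ha₀.trans ha₁.le) (add_div_two_lt_right.2 ha)

lemma laplace_iterWeightedInt_succ (hgc : Continuous g) (hg : ∀ a, a₀ < a → HasExpOrder g a)
    (ha₀ : 0 ≤ a₀) {s : ℂ} (hs : a₀ < s.re) (n : ℕ) :
    laplace (iterWeightedInt (n + 1) g) s = -deriv (laplace (iterWeightedInt n g)) s / s := by
  have hG := hasExpOrder_iterWeightedInt hg ha₀ n
  have hGc := continuous_iterWeightedInt hgc n
  have ha : a₀ < (a₀ + s.re) / 2 := left_lt_add_div_two.2 hs
  rw [((hG _ ha).hasDerivAt_laplace hGc (add_div_two_lt_right.2 hs)).deriv, neg_neg]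
  exact ((hG _ (left_lt_add_div_two.2 ha)).mul_ofReal (add_div_two_lt_right.2 ha)).laplace_primitive
    (hGc.mul continuous_ofReal) (ha₀.trans ha.le) (add_div_two_lt_right.2 hs)

end IterWeightedInt

lemma laplace_iterWeightedInt_sin_mul (b : ℂ) (n : ℕ) {s : ℂ} (hs : |b.im| < s.re) :
    laplace (iterWeightedInt n fun t => Complex.sin (b * t)) s =
      2 ^ n * n.factorial * b / (s ^ 2 + b ^ 2) ^ (n + 1) := by
  induction n generalizing s with
  | zero => simpa [iterWeightedInt] using laplace_sin_mul b hs
  | succ n ih =>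
    have hsin : ∀ a, |b.im| < a → HasExpOrder (fun t => Complex.sin (b * t)) a :=
      fun a ha => (hasExpOrder_sin_mul b).mono ha.le
    have hloc : laplace (iterWeightedInt n fun t => Complex.sin (b * t)) =ᶠ[𝓝 s]
        fun z => 2 ^ n * n.factorial * b / (z ^ 2 + b ^ 2) ^ (n + 1) :=
      ((isOpen_lt continuous_const continuous_re).eventually_mem hs).mono fun z hz => ih hz
    have hne := sq_add_sq_ne_zero_of_abs_im_lt hs
    have hderiv : HasDerivAt (fun z => 2 ^ n * n.factorial * b / (z ^ 2 + b ^ 2) ^ (n + 1))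
        (-(2 ^ n * n.factorial * b * ((n + 1) * (s ^ 2 + b ^ 2) ^ n * (2 * s))) /
          ((s ^ 2 + b ^ 2) ^ (n + 1)) ^ 2) s := by
      have hpow := ((hasDerivAt_pow 2 s).add_const (b ^ 2)).fun_pow (n + 1)
      refine ((hasDerivAt_const s _).div hpow (pow_ne_zero _ hne)).congr_deriv ?_
      push_cast
      ring
    have hs0 : s ≠ 0 := fun h => by simp [h] at hs; linarith [abs_nonneg b.im]
    rw [laplace_iterWeightedInt_succ (by fun_prop) hsin (abs_nonneg _) hs, hloc.deriv_eq,
      hderiv.deriv]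
    field_simp
    push_cast [Nat.factorial_succ]
    ring

theorem laplace_of_iterated_integral_sin (m : ℕ) (hm : 1 ≤ m) (b : ℂ) (s : ℂ)
    (hs : |b.im| < s.re) :
    ∫ t in Set.Ioi (0 : ℝ),
        Complex.exp (-s * t) * iterWeightedInt (m - 1) (fun t => Complex.sin (b * t)) t =
      2 ^ (m - 1) * (Nat.factorial (m - 1)) * b / (s ^ 2 + b ^ 2) ^ m := by
  obtain ⟨n, rfl⟩ := Nat.exists_eq_add_of_le' hm
  exact laplace_iterWeightedInt_sin_mul b n hs
end

section
/- For any continuous function f : [a, ∞) → ℝ, integer m ≥ 1, and t ≥ a ≥ 0, the m-fold iterated weighted integral satisfies (∫_a^t · t dt)^m f(t) = ∫_a^t ((t² − τ²)^{m−1}/(2m−2)!!)·f(τ)·τ dτ, where (2m−2)!! denotes the double factorial. -/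
/- Induction on `m`. With `g τ = f τ * τ` and `Rₙ(u) = ∫ₐᵘ (u² - τ²)ⁿ g(τ) dτ`, the Leibniz rule
gives `R'ₙ₊₁(u) = 2(n + 1) u Rₙ(u)`, the boundary term vanishing because the kernel is zero on the
diagonal. As `Rₙ₊₁(a) = 0`, `Rₙ₊₁ / (2n + 2)‼` is the primitive of `u Rₙ(u) / (2n)‼` vanishing
at `a`. The kernel is separable (binomial expansion), which reduces the Leibniz rule to the
product rule and the fundamental theorem of calculus. -/

open MeasureTheory Nat

/-- The iterated weighted integral operator `g ↦ (∫ₐ^t g(τ) τ dτ)`, iterated `n` times. -/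
noncomputable def iterWeightedIntFrom (a : ℝ) : ℕ → (ℝ → ℝ) → (ℝ → ℝ)
  | 0, g => g
  | n + 1, g => fun t => ∫ τ in a..t, iterWeightedIntFrom a n g τ * τ

theorem hasDerivAt_integral_of_eq_sum_mul {ι : Type*} (s : Finset ι) (p q : ι → ℝ → ℝ)
    (hp : ∀ i ∈ s, Differentiable ℝ (p i)) (hq : ∀ i ∈ s, Continuous (q i))
    {K K' : ℝ → ℝ → ℝ} (hK : ∀ u τ, K u τ = ∑ i ∈ s, p i u * q i τ)
    (hK' : ∀ u τ, HasDerivAt (fun v => K v τ) (K' u τ) u) (a u : ℝ) :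
    HasDerivAt (fun v => ∫ τ in a..v, K v τ) (K u u + ∫ τ in a..u, K' u τ) u := by
  have h_integral_sum : ∀ (c : ι → ℝ) (v : ℝ),
      ∫ τ in a..v, ∑ i ∈ s, c i * q i τ = ∑ i ∈ s, c i * ∫ τ in a..v, q i τ := fun c v => by
    rw [intervalIntegral.integral_finsetSum fun i hi =>
      ((hq i hi).const_mul _).intervalIntegrable _ _]
    simp only [intervalIntegral.integral_const_mul]
  have hK'_eq : ∀ τ, K' u τ = ∑ i ∈ s, deriv (p i) u * q i τ := fun τ =>
    (hK' u τ).unique <| by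
      simp only [hK]
      exact HasDerivAt.fun_sum fun i hi => ((hp i hi u).hasDerivAt).mul_const _
  have hterm : ∀ i ∈ s, HasDerivAt (fun v => p i v * ∫ τ in a..v, q i τ)
      (deriv (p i) u * (∫ τ in a..u, q i τ) + p i u * q i u) u := fun i hi =>
    (hp i hi u).hasDerivAt.mul ((hq i hi).integral_hasStrictDerivAt a u).hasDerivAt
  simp only [hK, h_integral_sum, hK'_eq]
  rw [add_comm, ← Finset.sum_add_distrib]
  exact HasDerivAt.fun_sum hterm

theorem hasDerivAt_integral_sq_sub_sq_pow_succ_mul {g : ℝ → ℝ} (hg : Continuous g) (a : ℝ)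
    (n : ℕ) (u : ℝ) :
    HasDerivAt (fun v => ∫ τ in a..v, (v ^ 2 - τ ^ 2) ^ (n + 1) * g τ)
      (2 * (n + 1) * u * ∫ τ in a..u, (u ^ 2 - τ ^ 2) ^ n * g τ) u := by
  have h := hasDerivAt_integral_of_eq_sum_mul (Finset.range (n + 2)) (fun k v => (v ^ 2) ^ k)
    (fun k τ => (-τ ^ 2) ^ (n + 1 - k) * (n + 1).choose k * g τ)
    (fun _ _ => by fun_prop) (fun _ _ => by fun_prop)
    (K := fun v τ => (v ^ 2 - τ ^ 2) ^ (n + 1) * g τ)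
    (K' := fun v τ => (n + 1) * (v ^ 2 - τ ^ 2) ^ n * (2 * v) * g τ)
    (fun v τ => by
      rw [sub_eq_add_neg, add_pow, Finset.sum_mul]
      exact Finset.sum_congr rfl fun _ _ => by simp only [mul_assoc])
    (fun v τ => by
      refine ((((hasDerivAt_pow 2 v).sub_const (τ ^ 2)).fun_pow (n + 1)).mul_const
        (g τ)).congr_deriv ?_
      push_cast
      ring)
    a u
  convert h using 1
  rw [sub_self, zero_pow n.succ_ne_zero, zero_mul, zero_add,
    ← intervalIntegral.integral_const_mul]
  exact intervalIntegral.integral_congr fun τ _ => by ring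

theorem continuous_integral_sq_sub_sq_pow_mul {g : ℝ → ℝ} (hg : Continuous g) (a : ℝ) (n : ℕ) :
    Continuous fun v => ∫ τ in a..v, (v ^ 2 - τ ^ 2) ^ n * g τ := by
  cases n with
  | zero =>
    simp only [pow_zero, one_mul]
    exact intervalIntegral.continuous_primitive (fun _ _ => hg.intervalIntegrable _ _) a
  | succ n =>
    exact continuous_iff_continuousAt.2 fun u =>
      (hasDerivAt_integral_sq_sub_sq_pow_succ_mul hg a n u).continuousAt

theorem iterWeightedIntFrom_succ {f : ℝ → ℝ} (hf : Continuous f) (a : ℝ) (n : ℕ) (t : ℝ) :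
    iterWeightedIntFrom a (n + 1) f t =
      (∫ τ in a..t, (t ^ 2 - τ ^ 2) ^ n * (f τ * τ)) / ((2 * n)‼ : ℝ) := by
  induction n generalizing t with
  | zero => simp [iterWeightedIntFrom]
  | succ n ih =>
    have hg : Continuous fun τ => f τ * τ := hf.mul continuous_id
    have hR := continuous_integral_sq_sub_sq_pow_mul hg a n
    have hdf : ((2 * (n + 1))‼ : ℝ) = (2 * n + 2) * ((2 * n)‼ : ℝ) := by
      rw [Nat.mul_succ, Nat.doubleFactorial_add_two]
      push_cast
      ring
    have hderiv : ∀ u ∈ Set.uIcc a t, HasDerivAt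
        (fun v => (∫ τ in a..v, (v ^ 2 - τ ^ 2) ^ (n + 1) * (f τ * τ)) / ((2 * (n + 1))‼ : ℝ))
        ((∫ τ in a..u, (u ^ 2 - τ ^ 2) ^ n * (f τ * τ)) / ((2 * n)‼ : ℝ) * u) u := fun u _ => by
      refine ((hasDerivAt_integral_sq_sub_sq_pow_succ_mul hg a n u).div_const _).congr_deriv ?_
      rw [hdf]
      field_simp
    calc iterWeightedIntFrom a (n + 1 + 1) f t
        = ∫ u in a..t, (∫ τ in a..u, (u ^ 2 - τ ^ 2) ^ n * (f τ * τ)) / ((2 * n)‼ : ℝ) * u := by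
          exact intervalIntegral.integral_congr fun u _ => by rw [ih]
      _ = _ := by
          rw [intervalIntegral.integral_eq_sub_of_hasDerivAt hderiv
            (((hR.div_const _).mul continuous_id).intervalIntegrable _ _)]
          simp

theorem iterated_weighted_integral_formula_general (f : ℝ → ℝ) (hf : Continuous f)
    (m : ℕ) (hm : 1 ≤ m) (a t : ℝ) :
    iterWeightedIntFrom a m f t =
      ∫ τ in a..t, ((t ^ 2 - τ ^ 2) ^ (m - 1) / (Nat.doubleFactorial (2 * m - 2) : ℝ))
        * f τ * τ := by
  obtain ⟨n, rfl⟩ := Nat.exists_eq_add_of_le' hm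
  rw [Nat.add_sub_cancel, show 2 * (n + 1) - 2 = 2 * n by omega, iterWeightedIntFrom_succ hf,
    ← intervalIntegral.integral_div]
  exact intervalIntegral.integral_congr fun τ _ => by ring

theorem iterated_weighted_integral_formula (f : ℝ → ℝ) (hf : Continuous f)
    (m : ℕ) (hm : 1 ≤ m) (a t : ℝ) (ha : 0 ≤ a) (hat : a ≤ t) :
    iterWeightedIntFrom a m f t =
      ∫ τ in a..t, ((t ^ 2 - τ ^ 2) ^ (m - 1) / (Nat.doubleFactorial (2 * m - 2) : ℝ))
        * f τ * τ :=
  iterated_weighted_integral_formula_general f hf m hm a t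
end

section
/- For m ≥ 2 and r, k ≥ 0 integers, the identity d^{2m−1−2k−r}/dt^{2m−1−2k−r} [∫₀^t ((t² − τ²)^{m−2} τ /((2m−2)!!(2m−4)!!))·(τ^{2i+1}/(2i+1)!) dτ] = C(m−1+i, i)·t^{2k+2i+r}/(2k+2i+r)! holds whenever 2m−1−2k−r ≥ 0, where C denotes the binomial coefficient. -/
/-!
Write m = n + 2. The integrand is a constant multiple of (t² − τ²)ⁿ τ^(2i+2), and
∫₀ᵗ (t² − τ²)ⁿ τ^(p+1) dτ = (2n)‼ p‼ / (p+2n+2)‼ · t^(p+2n+2) follows by induction on n from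
(t² − τ²)ⁿ⁺¹ = t² (t² − τ²)ⁿ − τ² (t² − τ²)ⁿ. Splitting factorials into double factorials and using
(2a)‼ = 2ᵃ a!, the constant becomes C(m−1+i, i) / N! with N = 2m + 2i − 1, so the integral is
C(m−1+i, i) tᴺ / N!, whose j-th derivative is C(m−1+i, i) t^(N−j) / (N−j)!.
-/

open MeasureTheory Nat

theorem Nat.choose_mul_doubleFactorial_two_mul (a b : ℕ) :
    (a + b).choose b * (2 * a)‼ * (2 * b)‼ = (2 * (a + b))‼ := by
  simp only [doubleFactorial_two_mul, ← add_choose_mul_factorial_mul_factorial a b, pow_add]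
  ring

theorem iteratedDeriv_pow_div_factorial {𝕜 : Type*} [NontriviallyNormedField 𝕜] [CharZero 𝕜]
    {N j : ℕ} (h : j ≤ N) (x : 𝕜) :
    iteratedDeriv j (fun y : 𝕜 => y ^ N / N !) x = x ^ (N - j) / (N - j)! := by
  rw [iteratedDeriv_div_const, iteratedDeriv_pow, ← factorial_mul_descFactorial h]
  push_cast
  have : (N.descFactorial j : 𝕜) ≠ 0 := by exact_mod_cast (descFactorial_pos.mpr h).ne'
  field_simp

theorem integral_sq_sub_sq_pow_mul_pow (n p : ℕ) (t : ℝ) :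
    ∫ τ in (0 : ℝ)..t, (t ^ 2 - τ ^ 2) ^ n * τ ^ (p + 1) =
      (2 * n)‼ * p‼ / (p + 2 * n + 2)‼ * t ^ (p + 2 * n + 2) := by
  induction n generalizing p with
  | zero =>
    simp only [pow_zero, one_mul, integral_pow, mul_zero, add_zero, doubleFactorial]
    push_cast
    field_simp
    ring
  | succ n ih =>
    have hsplit : ∀ τ : ℝ, (t ^ 2 - τ ^ 2) ^ (n + 1) * τ ^ (p + 1) =
        t ^ 2 * ((t ^ 2 - τ ^ 2) ^ n * τ ^ (p + 1)) - (t ^ 2 - τ ^ 2) ^ n * τ ^ (p + 2 + 1) :=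
      fun τ => by ring
    simp_rw [hsplit]
    rw [intervalIntegral.integral_sub (Continuous.intervalIntegrable (by fun_prop) _ _)
      (Continuous.intervalIntegrable (by fun_prop) _ _), intervalIntegral.integral_const_mul, ih, ih,
      show p + 2 + 2 * n + 2 = p + 2 * n + 2 + 2 by ring,
      show p + 2 * (n + 1) + 2 = p + 2 * n + 2 + 2 by ring, show 2 * (n + 1) = 2 * n + 2 by ring]
    simp only [doubleFactorial_add_two]
    push_cast
    field_simp
    ring

theorem integral_eq_choose_mul_pow_div_factorial (n i : ℕ) (t : ℝ) :
    ∫ τ in (0 : ℝ)..t, ((t ^ 2 - τ ^ 2) ^ n * τ / ((2 * n + 2)‼ * (2 * n)‼ : ℝ)) *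
        (τ ^ (2 * i + 1) / (2 * i + 1)! : ℝ) =
      (n + 1 + i).choose i * (t ^ (2 * n + 2 * i + 3) / (2 * n + 2 * i + 3)! : ℝ) := by
  have hintegrand : ∀ τ : ℝ,
      ((t ^ 2 - τ ^ 2) ^ n * τ / ((2 * n + 2)‼ * (2 * n)‼ : ℝ)) * (τ ^ (2 * i + 1) / (2 * i + 1)!) =
        ((2 * n + 2)‼ * (2 * n)‼ * (2 * i + 1)! : ℝ)⁻¹ *
          ((t ^ 2 - τ ^ 2) ^ n * τ ^ (2 * i + 1 + 1)) :=
    fun τ => by ring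
  simp_rw [hintegrand]
  rw [intervalIntegral.integral_const_mul, integral_sq_sub_sq_pow_mul_pow,
    show 2 * i + 1 + 2 * n + 2 = 2 * n + 2 * i + 3 by ring]
  have hchoose : ((n + 1 + i).choose i * (2 * n + 2)‼ * (2 * i)‼ : ℝ) = (2 * n + 2 * i + 2)‼ := by
    rw [show 2 * n + 2 = 2 * (n + 1) by ring, show 2 * n + 2 * i + 2 = 2 * (n + 1 + i) by ring]
    exact_mod_cast (n + 1).choose_mul_doubleFactorial_two_mul i
  have hodd : ((2 * i + 1)! : ℝ) = (2 * i + 1)‼ * (2 * i)‼ := by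
    exact_mod_cast factorial_eq_mul_doubleFactorial (2 * i)
  have htotal : ((2 * n + 2 * i + 3)! : ℝ) = (2 * n + 2 * i + 3)‼ * (2 * n + 2 * i + 2)‼ := by
    exact_mod_cast factorial_eq_mul_doubleFactorial (2 * n + 2 * i + 2)
  rw [hodd, htotal, ← hchoose]
  have : ((n + 1 + i).choose i : ℝ) ≠ 0 := by exact_mod_cast (choose_pos (by omega)).ne'
  field_simp

theorem iterated_deriv_integral_identity (m i k r : ℕ) (hm : 2 ≤ m)
    (hr : 2 * k + r ≤ 2 * m - 1) :
    ∀ t : ℝ,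
      iteratedDeriv (2 * m - 1 - 2 * k - r)
        (fun t : ℝ =>
          ∫ τ in (0 : ℝ)..t,
            ((t ^ 2 - τ ^ 2) ^ (m - 2) * τ /
                ((Nat.doubleFactorial (2 * m - 2) : ℝ) * (Nat.doubleFactorial (2 * m - 4) : ℝ)))
              * (τ ^ (2 * i + 1) / (Nat.factorial (2 * i + 1) : ℝ))) t =
      (Nat.choose (m - 1 + i) i : ℝ) * t ^ (2 * k + 2 * i + r) /
        (Nat.factorial (2 * k + 2 * i + r) : ℝ) := by
  obtain ⟨n, rfl⟩ : ∃ n, m = n + 2 := ⟨m - 2, by omega⟩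
  intro t
  rw [show 2 * (n + 2) - 2 = 2 * n + 2 by omega, show 2 * (n + 2) - 4 = 2 * n by omega,
    show n + 2 - 2 = n by omega, show n + 2 - 1 + i = n + 1 + i by omega]
  simp_rw [integral_eq_choose_mul_pow_div_factorial, iteratedDeriv_const_mul_field]
  rw [iteratedDeriv_pow_div_factorial (by omega),
    show 2 * n + 2 * i + 3 - (2 * (n + 2) - 1 - 2 * k - r) = 2 * k + 2 * i + r by omega,
    mul_div_assoc]
end
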